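/- Let P ⊂ ℝ^N be an integral convex polytope of dimension d such that μ_midp(P) ≥ (d−1)/2, where μ_midp(P) is the smallest k > 0 such that kP has the integer decomposition property. Then nP has the integer decomposition property for every n ≥ μ_midp(P); i.e., μ_idp(P) = μ_midp(P). -/

import Mathlib

open scoped BigOperators Pointwise

/-- Points of `ℝ^N`. -/
abbrev Pt (N : ℕ) := Fin N → ℝ

/-- A point has integer coordinates. -/
def IsLat {N : ℕ} (x : Pt N) : Prop := ∀ i, ∃ z : ℤ, x i = (z : ℝ)

/-- Lattice points of a set. -/
def latPts {N : ℕ} (P : Set (Pt N)) : Set (Pt N) := {x ∈ P | IsLat x}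

/-- The dilated polytope `kP`. -/
def dil {N : ℕ} (k : ℕ) (P : Set (Pt N)) : Set (Pt N) := (k : ℝ) • P

/-- `α` is a sum of `k` lattice points of `P`. -/
def DecomposesIn {N : ℕ} (P : Set (Pt N)) (k : ℕ) (α : Pt N) : Prop :=
  ∃ f : Fin k → Pt N, (∀ i, f i ∈ latPts P) ∧ α = ∑ i, f i

/-- The integer decomposition property. -/
def HasIDP {N : ℕ} (P : Set (Pt N)) : Prop :=
  ∀ k : ℕ, 0 < k → ∀ α ∈ latPts (dil k P), DecomposesIn P k α

/-- Very ampleness: decomposition holds for all sufficiently large `k`. -/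
def VeryAmple {N : ℕ} (P : Set (Pt N)) : Prop :=
  ∃ k₀ : ℕ, ∀ k, k₀ ≤ k → ∀ α ∈ latPts (dil k P), DecomposesIn P k α

/-- An integral convex polytope: the convex hull of finitely many lattice points
(which include all its vertices). -/
def IsIntegralPolytope {N : ℕ} (P : Set (Pt N)) : Prop :=
  ∃ V : Finset (Pt N), (∀ v ∈ V, IsLat v) ∧ P = convexHull ℝ (V : Set (Pt N))

/-- Dimension of a polytope: the rank of the direction of its affine span. -/
noncomputable def polyDim {N : ℕ} (P : Set (Pt N)) : ℕ :=
  Module.finrank ℝ (affineSpan ℝ P).direction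

/-- Lattice points of the cone `C(P) ⊂ ℝ^{N+1}` generated by `P̃ = P × {1}`;
a point of `ℝ^{N+1}` is represented as a pair `(x, deg)`. -/
def coneLat {N : ℕ} (P : Set (Pt N)) : Set (Pt N × ℝ) :=
  {p | (∃ (m : ℕ) (c : Fin m → ℝ) (w : Fin m → Pt N),
        (∀ i, 0 ≤ c i ∧ w i ∈ P) ∧ p.1 = ∑ i, c i • w i ∧ p.2 = ∑ i, c i)
    ∧ IsLat p.1 ∧ ∃ z : ℤ, p.2 = (z : ℝ)}

/-- The monoid `ℤ_{≥0}(P̃ ∩ ℤ^{N+1})` generated by the degree-one lattice points of the cone. -/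
def genMonoid {N : ℕ} (P : Set (Pt N)) : Set (Pt N × ℝ) :=
  {p | ∃ (m : ℕ) (f : Fin m → Pt N), (∀ i, f i ∈ latPts P) ∧
        p.1 = ∑ i, f i ∧ p.2 = (m : ℝ)}

/-- `H` is the minimal Hilbert basis of the cone `C(P)`. -/
def IsMinHilbertBasis {N : ℕ} (P : Set (Pt N)) (H : Set (Pt N × ℝ)) : Prop :=
  (H.Finite ∧ H ⊆ coneLat P ∧
      coneLat P ⊆ (AddSubmonoid.closure H : Set (Pt N × ℝ))) ∧
  ∀ H' : Set (Pt N × ℝ),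
    (H'.Finite ∧ H' ⊆ coneLat P ∧
      coneLat P ⊆ (AddSubmonoid.closure H' : Set (Pt N × ℝ))) → H ⊆ H'

/-- `v` lists the vertices of an empty `d`-simplex contained in `P`. -/
def EmptySimplexIn {N : ℕ} (P : Set (Pt N)) (d : ℕ) (v : Fin (d+1) → Pt N) : Prop :=
  (∀ i, v i ∈ latPts P) ∧ AffineIndependent ℝ v ∧
    ∀ x ∈ convexHull ℝ (Set.range v), IsLat x → x ∈ Set.range v

/-- `Box(S)` of a simplex with vertex list `v`: lattice points
`Σ rᵢ (vᵢ, 1)` with `0 ≤ rᵢ < 1`. -/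
def boxSimplex {N d : ℕ} (v : Fin (d+1) → Pt N) : Set (Pt N × ℝ) :=
  {p | ∃ r : Fin (d+1) → ℝ, (∀ i, 0 ≤ r i ∧ r i < 1) ∧
      p.1 = ∑ i, r i • v i ∧ p.2 = ∑ i, r i ∧ IsLat p.1 ∧ ∃ z : ℤ, p.2 = (z : ℝ)}

/-- `Box(P)`: holes of `P`, i.e. box points of empty `d`-simplices in `P` that are not
nonnegative integer combinations of `P̃ ∩ ℤ^{N+1}`. -/
def boxP {N : ℕ} (P : Set (Pt N)) (d : ℕ) : Set (Pt N × ℝ) :=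
  (⋃ v ∈ {v : Fin (d+1) → Pt N | EmptySimplexIn P d v}, boxSimplex v) \ genMonoid P

/-- Ehrhart counting function `|nP ∩ ℤ^N|`. -/
noncomputable def ehr {N : ℕ} (P : Set (Pt N)) (n : ℕ) : ℕ := (latPts (dil n P)).ncard

/-- The `δ`-vector of a `d`-dimensional polytope, via finite differences of the
Ehrhart counting function. -/
noncomputable def deltaVec {N : ℕ} (P : Set (Pt N)) (d i : ℕ) : ℤ :=
  ∑ j ∈ Finset.range (i+1), (-1)^j * ((d+1).choose j) * (ehr P (i - j) : ℤ)

/-!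
Every lattice point of `MP` is written in barycentric coordinates of an empty lattice simplex of
`P`; splitting off the integer parts leaves a box point of degree at most `d - 1`, because a box
point of degree `d` would reflect to a lattice point of the simplex that is not a vertex. Hence
every lattice point of `m(nP)` is a lattice point of `2kP` plus `mn - 2k` lattice points of `P`.
The (IDP) of `kP` splits the first summand into two lattice points of `kP`; padding each with
`n - k` lattice points of `P` and grouping the remaining ones in blocks of `n` writes the point as
a sum of `m` lattice points of `nP`.
-/

section ConvexGeometry

variable {E : Type*} [AddCommGroup E] [Module ℝ E]

theorem Finset.sum_smul_eq_of_weight_eq_one {t : Finset E} {w : E → ℝ} {j : E}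
    (hw₀ : ∀ v ∈ t, 0 ≤ w v) (hw₁ : ∑ v ∈ t, w v = 1) (hj : j ∈ t) (hwj : w j = 1) :
    ∑ v ∈ t, w v • v = j := by
  classical
  have hrest : ∑ v ∈ t.erase j, w v = 0 := by linarith [Finset.add_sum_erase t w hj]
  have hzero := (Finset.sum_eq_zero_iff_of_nonneg fun v hv =>
    hw₀ v (Finset.mem_of_mem_erase hv)).1 hrest
  rw [Finset.sum_eq_single_of_mem j hj fun v hv hvj => by
    rw [hzero v (Finset.mem_erase.2 ⟨hvj, hv⟩), zero_smul], hwj, one_smul]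

theorem AffineIndependent.eq_ite_of_sum_smul_eq [DecidableEq E] {t : Finset E}
    (ht : AffineIndependent ℝ ((↑) : t → E)) {w : E → ℝ} {j : E}
    (hw₁ : ∑ v ∈ t, w v = 1) (hj : j ∈ t) (h : ∑ v ∈ t, w v • v = j) :
    ∀ v ∈ t, w v = if v = j then 1 else 0 :=
  ht.eq_of_sum_eq_sum_subtype (by simp [hw₁, hj]) (by simp [h, hj, ite_smul])

theorem AffineIndependent.mem_extremePoints_convexHull {t : Finset E}
    (ht : AffineIndependent ℝ ((↑) : t → E)) {j : E} (hj : j ∈ t) :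
    j ∈ (convexHull ℝ (t : Set E)).extremePoints ℝ := by
  classical
  refine mem_extremePoints_iff_left.2 ⟨subset_convexHull ℝ _ hj, ?_⟩
  rintro x₁ hx₁ x₂ hx₂ ⟨a, b, ha, hb, hab, hjx⟩
  obtain ⟨c₁, hc₁0, hc₁1, rfl⟩ := Finset.mem_convexHull'.1 hx₁
  obtain ⟨c₂, hc₂0, hc₂1, rfl⟩ := Finset.mem_convexHull'.1 hx₂
  have hj1 := ht.eq_ite_of_sum_smul_eq (w := fun v => a * c₁ v + b * c₂ v)
    (by simp [Finset.sum_add_distrib, ← Finset.mul_sum, hc₁1, hc₂1, hab])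
    hj (by simpa [add_smul, mul_smul, Finset.sum_add_distrib, ← Finset.smul_sum] using hjx) j hj
  have hc₁j : c₁ j ≤ 1 := hc₁1 ▸ Finset.single_le_sum hc₁0 hj
  have hc₂j : c₂ j ≤ 1 := hc₂1 ▸ Finset.single_le_sum hc₂0 hj
  simp only [if_true] at hj1
  exact Finset.sum_smul_eq_of_weight_eq_one hc₁0 hc₁1 hj (by nlinarith)

theorem AffineIndependent.notMem_convexHull_insert_erase [DecidableEq E] {t : Finset E}
    (ht : AffineIndependent ℝ ((↑) : t → E)) {j u : E} (hj : j ∈ t)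
    (hu : u ∈ convexHull ℝ (t : Set E)) (huj : u ≠ j) :
    j ∉ convexHull ℝ ((insert u (t.erase j) : Finset E) : Set E) := by
  intro hj'
  have hsub : convexHull ℝ ((insert u (t.erase j) : Finset E) : Set E) ⊆
      convexHull ℝ (t : Set E) := by
    refine convexHull_min ?_ (convex_convexHull ℝ _)
    rw [Finset.coe_insert, Set.insert_subset_iff]
    exact ⟨hu, fun v hv => subset_convexHull ℝ _ (Finset.mem_of_mem_erase hv)⟩
  have := extremePoints_convexHull_subset
    (inter_extremePoints_subset_extremePoints_of_subset hsub
      ⟨hj', ht.mem_extremePoints_convexHull hj⟩)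
  simp [huj.symm] at this

theorem Finset.exists_mem_convexHull_insert_erase [DecidableEq E] {t : Finset E} {x u : E}
    (hx : x ∈ convexHull ℝ (t : Set E)) (hu : u ∈ convexHull ℝ (t : Set E)) (hut : u ∉ t) :
    ∃ j ∈ t, x ∈ convexHull ℝ ((insert u (t.erase j) : Finset E) : Set E) := by
  obtain ⟨a, ha0, ha1, rfl⟩ := Finset.mem_convexHull'.1 hx
  obtain ⟨b, hb0, hb1, hbu⟩ := Finset.mem_convexHull'.1 hu
  have hpos : (t.filter fun v => 0 < b v).Nonempty := by
    by_contra! h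
    have : ∑ v ∈ t, b v ≤ 0 := Finset.sum_nonpos fun v hv =>
      not_lt.1 fun hbv => (Finset.filter_eq_empty_iff.1 h) hv hbv
    linarith
  -- `j` is where the ray from `u` through `x` leaves the simplex: it minimises `a / b`.
  obtain ⟨j, hjF, hjmin⟩ := Finset.exists_min_image _ (fun v => a v / b v) hpos
  obtain ⟨hj, hbj⟩ := Finset.mem_filter.1 hjF
  set l := a j / b j
  have hl : 0 ≤ l := div_nonneg (ha0 j hj) hbj.le
  have hw₀ : ∀ v ∈ t, 0 ≤ a v - l * b v := fun v hv => by
    rcases lt_or_ge 0 (b v) with hbv | hbv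
    · exact sub_nonneg.2 ((le_div_iff₀ hbv).1 (hjmin v (Finset.mem_filter.2 ⟨hv, hbv⟩)))
    · nlinarith [ha0 v hv]
  have hwj : a j - l * b j = 0 := by simp [l, div_mul_cancel₀ _ hbj.ne']
  have hu' : u ∉ t.erase j := fun h => hut (Finset.mem_of_mem_erase h)
  refine ⟨j, hj, Finset.mem_convexHull'.2
    ⟨Function.update (fun v => a v - l * b v) u l, fun v hv => ?_, ?_, ?_⟩⟩
  · rcases Finset.mem_insert.1 hv with rfl | hv
    · simpa using hl
    · rw [Function.update_of_ne (ne_of_mem_of_not_mem hv hu')]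
      exact hw₀ v (Finset.mem_of_mem_erase hv)
  · rw [Finset.sum_insert hu', Function.update_self,
      Finset.sum_congr rfl fun v hv => Function.update_of_ne (ne_of_mem_of_not_mem hv hu') _ _,
      Finset.sum_erase t hwj, Finset.sum_sub_distrib, ← Finset.mul_sum, ha1, hb1]
    ring
  · rw [Finset.sum_insert hu', Function.update_self,
      Finset.sum_congr rfl fun v hv => by
        rw [Function.update_of_ne (ne_of_mem_of_not_mem hv hu')],
      Finset.sum_erase t (by rw [hwj, zero_smul])]
    simp only [sub_smul, mul_smul, Finset.sum_sub_distrib, ← Finset.smul_sum, hbu]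
    abel

theorem AffineIndependent.exists_subset_insert_notMem_convexHull {t : Finset E}
    (ht : AffineIndependent ℝ ((↑) : t → E)) {x u : E} (hx : x ∈ convexHull ℝ (t : Set E))
    (hu : u ∈ convexHull ℝ (t : Set E)) (hut : u ∉ t) :
    ∃ t' : Finset E, (t' : Set E) ⊆ insert u ↑t ∧ AffineIndependent ℝ ((↑) : t' → E) ∧
      x ∈ convexHull ℝ (t' : Set E) ∧ ∃ j ∈ t, j ∉ convexHull ℝ (t' : Set E) := by
  classical
  obtain ⟨j, hj, hxj⟩ := t.exists_mem_convexHull_insert_erase hx hu hut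
  rw [convexHull_eq_union] at hxj
  simp only [Set.mem_iUnion] at hxj
  obtain ⟨t', ht'sub, ht', hxt'⟩ := hxj
  refine ⟨t', ht'sub.trans ?_, ht', hxt', j, hj, fun hjt' => ?_⟩
  · simpa using Set.insert_subset_insert (Finset.erase_subset j t)
  · exact ht.notMem_convexHull_insert_erase hj hu (ne_of_mem_of_not_mem hj hut).symm
      (convexHull_mono ht'sub hjt')

end ConvexGeometry

section Lattice

variable {N : ℕ}

theorem isLat_iff_mem_span {x : Pt N} :
    IsLat x ↔ x ∈ Submodule.span ℤ (Set.range (Pi.basisFun ℝ (Fin N))) := by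
  simp [IsLat, Module.Basis.mem_span_iff_repr_mem, eq_comm]

theorem IsLat.add {x y : Pt N} (hx : IsLat x) (hy : IsLat y) : IsLat (x + y) :=
  isLat_iff_mem_span.2 (add_mem (isLat_iff_mem_span.1 hx) (isLat_iff_mem_span.1 hy))

theorem IsLat.sub {x y : Pt N} (hx : IsLat x) (hy : IsLat y) : IsLat (x - y) :=
  isLat_iff_mem_span.2 (sub_mem (isLat_iff_mem_span.1 hx) (isLat_iff_mem_span.1 hy))

theorem isLat_sum {ι : Type*} (s : Finset ι) {f : ι → Pt N} (h : ∀ i ∈ s, IsLat (f i)) :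
    IsLat (∑ i ∈ s, f i) :=
  isLat_iff_mem_span.2 (sum_mem fun i hi => isLat_iff_mem_span.1 (h i hi))

theorem finite_latPts {S : Set (Pt N)} (hS : Bornology.IsBounded S) : (latPts S).Finite := by
  have : latPts S = S ∩ Submodule.span ℤ (Set.range (Pi.basisFun ℝ (Fin N))) := by
    ext x; simp [latPts, isLat_iff_mem_span]
  exact this ▸ ZSpan.setFinite_inter (Pi.basisFun ℝ (Fin N)) hS

theorem latPts_mono {P Q : Set (Pt N)} (h : P ⊆ Q) : latPts P ⊆ latPts Q :=
  fun _ hx => ⟨h hx.1, hx.2⟩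

theorem dil_mono {P Q : Set (Pt N)} (h : P ⊆ Q) (k : ℕ) : dil k P ⊆ dil k Q :=
  Set.smul_set_mono h

theorem dil_dil (a b : ℕ) (P : Set (Pt N)) : dil a (dil b P) = dil (a * b) P := by
  simp [dil, smul_smul]

theorem Convex.dil_add {P : Set (Pt N)} (hP : Convex ℝ P) (a b : ℕ) :
    dil (a + b) P = dil a P + dil b P := by
  simpa [dil] using hP.add_smul (Nat.cast_nonneg a) (Nat.cast_nonneg b)

theorem Convex.add_mem_latPts_dil {P : Set (Pt N)} (hP : Convex ℝ P) {a b : ℕ} {x y : Pt N}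
    (hx : x ∈ latPts (dil a P)) (hy : y ∈ latPts (dil b P)) : x + y ∈ latPts (dil (a + b) P) :=
  ⟨hP.dil_add a b ▸ Set.add_mem_add hx.1 hy.1, hx.2.add hy.2⟩

theorem IsIntegralPolytope.convex {P : Set (Pt N)} (hP : IsIntegralPolytope P) : Convex ℝ P := by
  obtain ⟨V, -, rfl⟩ := hP
  exact convex_convexHull ℝ _

end Lattice

namespace DecomposesIn

variable {N : ℕ} {P Q : Set (Pt N)} {a b c : ℕ} {x y : Pt N}

theorem zero : DecomposesIn P 0 (0 : Pt N) :=
  ⟨Fin.elim0, fun i => i.elim0, by simp⟩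

theorem single (hx : x ∈ latPts P) : DecomposesIn P 1 x :=
  ⟨fun _ => x, fun _ => hx, by simp⟩

theorem add (hx : DecomposesIn P a x) (hy : DecomposesIn P b y) :
    DecomposesIn P (a + b) (x + y) := by
  obtain ⟨f, hf, rfl⟩ := hx
  obtain ⟨g, hg, rfl⟩ := hy
  refine ⟨Fin.append f g, Fin.addCases (by simpa using hf) (by simpa using hg), ?_⟩
  simp [Fin.sum_univ_add]

theorem exists_add_of_add (h : DecomposesIn P (a + b) x) :
    ∃ y z, x = y + z ∧ DecomposesIn P a y ∧ DecomposesIn P b z := by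
  obtain ⟨f, hf, rfl⟩ := h
  exact ⟨_, _, Fin.sum_univ_add f, ⟨_, fun i => hf _, rfl⟩, ⟨_, fun i => hf _, rfl⟩⟩

theorem nsmul {v : Pt N} (hv : v ∈ latPts P) (c : ℕ) : DecomposesIn P c (c • v) :=
  ⟨fun _ => v, fun _ => hv, by simp⟩

theorem sum {ι : Type*} (s : Finset ι) {c : ι → ℕ} {x : ι → Pt N}
    (h : ∀ i ∈ s, DecomposesIn P (c i) (x i)) :
    DecomposesIn P (∑ i ∈ s, c i) (∑ i ∈ s, x i) := by
  classical
  induction s using Finset.induction_on with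
  | empty => simpa using zero
  | insert i s hi ih =>
    rw [Finset.sum_insert hi, Finset.sum_insert hi]
    exact (h i (Finset.mem_insert_self i s)).add
      (ih fun j hj => h j (Finset.mem_insert_of_mem hj))

theorem mono (h : DecomposesIn P c x) (hPQ : P ⊆ Q) : DecomposesIn Q c x := by
  obtain ⟨f, hf, rfl⟩ := h
  exact ⟨f, fun i => latPts_mono hPQ (hf i), rfl⟩

theorem isLat (h : DecomposesIn P c x) : IsLat x := by
  obtain ⟨f, hf, rfl⟩ := h
  exact isLat_sum _ fun i _ => (hf i).2

theorem mem_dil (hP : Convex ℝ P) (hne : P.Nonempty) :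
    ∀ {c : ℕ} {x : Pt N}, DecomposesIn P c x → x ∈ dil c P
  | 0, _, ⟨f, _, rfl⟩ => by simp [dil, Set.zero_smul_set hne]
  | c + 1, _, h => by
    obtain ⟨y, z, rfl, hy, ⟨f, hf, rfl⟩⟩ := h.exists_add_of_add
    rw [hP.dil_add]
    exact Set.add_mem_add (mem_dil hP hne hy) (by simpa [dil] using (hf 0).1)

theorem mem_latPts (hP : Convex ℝ P) (hne : P.Nonempty) (h : DecomposesIn P c x) :
    x ∈ latPts (dil c P) :=
  ⟨h.mem_dil hP hne, h.isLat⟩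

theorem to_dil (hP : Convex ℝ P) (hne : P.Nonempty) :
    ∀ {a : ℕ} {x : Pt N}, DecomposesIn P (a * b) x → DecomposesIn (dil b P) a x
  | 0, _, h => by
    rw [Nat.zero_mul] at h
    obtain ⟨f, -, rfl⟩ := h
    simpa using zero
  | a + 1, _, h => by
    rw [Nat.succ_mul] at h
    obtain ⟨y, z, rfl, hy, hz⟩ := h.exists_add_of_add
    exact (to_dil hP hne hy).add (single (hz.mem_latPts hP hne))

end DecomposesIn

theorem Convex.add_mem_latPts_dil_of_decomposesIn {N : ℕ} {P : Set (Pt N)} (hP : Convex ℝ P)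
    {a b : ℕ} {x y : Pt N} (hx : x ∈ latPts (dil a P)) (hy : DecomposesIn P b y) :
    x + y ∈ latPts (dil (a + b) P) :=
  hP.add_mem_latPts_dil hx (hy.mem_latPts hP (Set.smul_set_nonempty.1 ⟨x, hx.1⟩))

section EmptySimplex

variable {N : ℕ}

def IsEmptyLatticeSimplex (t : Finset (Pt N)) : Prop :=
  (∀ v ∈ t, IsLat v) ∧ AffineIndependent ℝ ((↑) : t → Pt N) ∧
    latPts (convexHull ℝ (t : Set (Pt N))) ⊆ t

theorem card_le_polyDim_add_one {P : Set (Pt N)} {t : Finset (Pt N)}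
    (ht : AffineIndependent ℝ ((↑) : t → Pt N)) (htP : (t : Set (Pt N)) ⊆ P) :
    t.card ≤ polyDim P + 1 := by
  have hcard := ht.card_le_finrank_succ
  rw [Fintype.card_coe] at hcard
  have hdim : Module.finrank ℝ (vectorSpan ℝ (Set.range ((↑) : t → Pt N))) ≤ polyDim P :=
    Submodule.finrank_mono (by rw [direction_affineSpan]; exact vectorSpan_mono ℝ (by simpa))
  omega

theorem exists_isEmptyLatticeSimplex {V : Finset (Pt N)} (hV : ∀ v ∈ V, IsLat v) {x : Pt N}
    (hx : x ∈ convexHull ℝ (V : Set (Pt N))) :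
    ∃ t : Finset (Pt N), IsEmptyLatticeSimplex t ∧
      (t : Set (Pt N)) ⊆ convexHull ℝ (V : Set (Pt N)) ∧ x ∈ convexHull ℝ (t : Set (Pt N)) := by
  let Admissible (t : Finset (Pt N)) : Prop := (∀ v ∈ t, IsLat v) ∧
    AffineIndependent ℝ ((↑) : t → Pt N) ∧ (t : Set (Pt N)) ⊆ convexHull ℝ (V : Set (Pt N)) ∧
    x ∈ convexHull ℝ (t : Set (Pt N))
  have hex : ∃ t, Admissible t := by
    rw [convexHull_eq_union] at hx
    simp only [Set.mem_iUnion] at hx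
    obtain ⟨t, htV, ht, hxt⟩ := hx
    exact ⟨t, fun v hv => hV v (htV hv), ht, htV.trans (subset_convexHull ℝ _), hxt⟩
  -- A simplex with fewest lattice points is empty: a lattice point `u` that is not a vertex
  -- would give a smaller one, missing a vertex `j`.
  obtain ⟨t, ⟨hlat, ht, htV, hxt⟩, hmin⟩ := exists_minimalFor_of_wellFoundedLT Admissible
    (fun t => (latPts (convexHull ℝ (t : Set (Pt N)))).ncard) hex
  refine ⟨t, ⟨hlat, ht, fun u hu => ?_⟩, htV, hxt⟩
  by_contra hut
  obtain ⟨t', ht'u, ht', hxt', j, hj, hjt'⟩ :=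
    ht.exists_subset_insert_notMem_convexHull hxt hu.1 hut
  have hsub : convexHull ℝ (t' : Set (Pt N)) ⊆ convexHull ℝ (t : Set (Pt N)) :=
    convexHull_min (ht'u.trans (Set.insert_subset hu.1 (subset_convexHull ℝ _)))
      (convex_convexHull ℝ _)
  have hlt : (latPts (convexHull ℝ (t' : Set (Pt N)))).ncard <
      (latPts (convexHull ℝ (t : Set (Pt N)))).ncard :=
    Set.ncard_lt_ncard ⟨latPts_mono hsub, fun h => hjt' (h ⟨subset_convexHull ℝ _ hj, hlat j hj⟩).1⟩
      (finite_latPts (t.finite_toSet.isCompact_convexHull (𝕜 := ℝ)).isBounded)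
  have ht'adm : Admissible t' := by
    refine ⟨fun v hv => ?_, ht',
      ((subset_convexHull ℝ _).trans hsub).trans (convexHull_min htV (convex_convexHull ℝ _)), hxt'⟩
    rcases ht'u hv with rfl | hv
    · exact hu.2
    · exact hlat v hv
  exact (hmin ht'adm hlt.le).not_gt hlt

theorem IsEmptyLatticeSimplex.boxDegree_le_card_sub_two {t : Finset (Pt N)}
    (ht : IsEmptyLatticeSimplex t) {r : Pt N → ℝ} (hr : ∀ v ∈ t, 0 ≤ r v ∧ r v < 1)
    (hlat : IsLat (∑ v ∈ t, r v • v)) {s : ℕ} (hs : ∑ v ∈ t, r v = s) : s ≤ t.card - 2 := by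
  classical
  obtain ⟨htlat, hai, hempty⟩ := ht
  rcases t.eq_empty_or_nonempty with rfl | hne
  · simp only [Finset.sum_empty] at hs
    exact_mod_cast hs.ge
  have hlt : s < t.card := by
    have := Finset.sum_lt_sum_of_nonempty hne fun v hv => (hr v hv).2
    rw [hs, Finset.sum_const, nsmul_one] at this
    exact_mod_cast this
  by_contra! hcard
  -- If `s = card - 1`, the complementary box point `∑ (1 - r v) • v` has weights summing to 1:
  -- it is a lattice point of the simplex, hence a vertex, which forces all other `r v = 1`.
  have hδsum : ∑ v ∈ t, (1 - r v) = 1 := by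
    rw [Finset.sum_sub_distrib, hs, Finset.sum_const, nsmul_one]
    have : t.card = s + 1 := by omega
    rw [this]
    push_cast
    ring
  have hδ : ∑ v ∈ t, (1 - r v) • v ∈ t := hempty
    ⟨Finset.mem_convexHull'.2 ⟨_, fun v hv => sub_nonneg.2 (hr v hv).2.le, hδsum, rfl⟩, by
      simpa [sub_smul, Finset.sum_sub_distrib] using (isLat_sum t fun v hv => htlat v hv).sub hlat⟩
  obtain ⟨v, hv, hvδ⟩ := Finset.exists_mem_ne (by omega : 1 < t.card) (∑ v ∈ t, (1 - r v) • v)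
  have := hai.eq_ite_of_sum_smul_eq hδsum hδ rfl v hv
  rw [if_neg hvδ] at this
  linarith [(hr v hv).2]

theorem sum_smul_mem_dil_convexHull {t : Finset (Pt N)} (hne : t.Nonempty) {w : Pt N → ℝ}
    (hw₀ : ∀ v ∈ t, 0 ≤ w v) {s : ℕ} (hs : ∑ v ∈ t, w v = s) :
    ∑ v ∈ t, w v • v ∈ dil s (convexHull ℝ (t : Set (Pt N))) := by
  rcases Nat.eq_zero_or_pos s with rfl | hs0
  · have hw := (Finset.sum_eq_zero_iff_of_nonneg hw₀).1 (by simpa using hs)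
    rw [Finset.sum_eq_zero fun v hv => by rw [hw v hv, zero_smul]]
    simp [dil, Set.zero_smul_set (Finset.coe_nonempty.2 hne).convexHull]
  have hs0' : (s : ℝ) ≠ 0 := by positivity
  refine Set.mem_smul_set.2 ⟨∑ v ∈ t, (w v / s) • v, Finset.mem_convexHull'.2
    ⟨_, fun v hv => div_nonneg (hw₀ v hv) s.cast_nonneg, by rw [← Finset.sum_div, hs,
      div_self hs0'], rfl⟩, ?_⟩
  simp [Finset.smul_sum, smul_smul, mul_div_cancel₀ _ hs0']

theorem IsEmptyLatticeSimplex.exists_latPts_add_decomposesIn {t : Finset (Pt N)}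
    (ht : IsEmptyLatticeSimplex t) {x : Pt N} (hx : x ∈ convexHull ℝ (t : Set (Pt N))) {M : ℕ}
    (hMx : IsLat ((M : ℝ) • x)) :
    ∃ s ≤ t.card - 2, ∃ γ ∈ latPts (dil s (convexHull ℝ (t : Set (Pt N)))),
      ∃ q, DecomposesIn (convexHull ℝ (t : Set (Pt N))) (M - s) q ∧ (M : ℝ) • x = γ + q := by
  have hne : t.Nonempty := Finset.coe_nonempty.1 (convexHull_nonempty_iff.1 ⟨x, hx⟩)
  obtain ⟨a, ha0, ha1, rfl⟩ := Finset.mem_convexHull'.1 hx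
  set μ : Pt N → ℝ := fun v => M * a v
  have hμ0 : ∀ v ∈ t, 0 ≤ μ v := fun v hv => mul_nonneg M.cast_nonneg (ha0 v hv)
  set c : Pt N → ℕ := fun v => ⌊μ v⌋₊
  have hcμ : ∀ v ∈ t, (c v : ℝ) ≤ μ v := fun v hv => Nat.floor_le (hμ0 v hv)
  have hcM : ∑ v ∈ t, c v ≤ M := by
    have : ∑ v ∈ t, (c v : ℝ) ≤ M := by
      rw [← mul_one (M : ℝ), ← ha1, Finset.mul_sum]
      exact Finset.sum_le_sum hcμ
    exact_mod_cast this
  set q := ∑ v ∈ t, c v • v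
  have hq : DecomposesIn (convexHull ℝ (t : Set (Pt N))) (M - (M - ∑ v ∈ t, c v)) q := by
    rw [Nat.sub_sub_self hcM]
    exact DecomposesIn.sum t fun v hv => .nsmul ⟨subset_convexHull ℝ _ hv, ht.1 v hv⟩ _
  set γ := ∑ v ∈ t, (μ v - c v) • v
  have hsplit : (M : ℝ) • ∑ v ∈ t, a v • v = γ + q := by
    simp only [γ, q, μ, Finset.smul_sum, smul_smul, ← Finset.sum_add_distrib, sub_smul,
      Nat.cast_smul_eq_nsmul, sub_add_cancel]
  have hγlat : IsLat γ := by
    simpa [hsplit] using hMx.sub hq.isLat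
  have hγsum : ∑ v ∈ t, (μ v - c v) = ((M - ∑ v ∈ t, c v : ℕ) : ℝ) := by
    rw [Nat.cast_sub hcM, Finset.sum_sub_distrib, ← Finset.mul_sum, ha1, mul_one]
    push_cast
    ring
  refine ⟨_, ht.boxDegree_le_card_sub_two (fun v hv => ⟨sub_nonneg.2 (hcμ v hv), ?_⟩)
    hγlat hγsum, γ, ⟨sum_smul_mem_dil_convexHull hne (fun v hv => sub_nonneg.2 (hcμ v hv))
      hγsum, hγlat⟩, q, hq, hsplit⟩
  linarith [Nat.lt_floor_add_one (μ v)]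

end EmptySimplex

theorem IsIntegralPolytope.exists_latPts_add_decomposesIn {N : ℕ} {P : Set (Pt N)}
    (hP : IsIntegralPolytope P) {r M : ℕ} (hr : polyDim P - 1 ≤ r) (hrM : r ≤ M) {α : Pt N}
    (hα : α ∈ latPts (dil M P)) :
    ∃ γ ∈ latPts (dil r P), ∃ q, DecomposesIn P (M - r) q ∧ α = γ + q := by
  obtain ⟨V, hV, rfl⟩ := hP
  obtain ⟨⟨x, hx, rfl⟩, hαlat⟩ := hα
  obtain ⟨t, ht, htV, hxt⟩ := exists_isEmptyLatticeSimplex hV hx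
  obtain ⟨s, hst, γ, hγ, q, hq, hsum⟩ := ht.exists_latPts_add_decomposesIn hxt hαlat
  have hcard := card_le_polyDim_add_one ht.2.1 htV
  have htV' : convexHull ℝ (t : Set (Pt N)) ⊆ convexHull ℝ (V : Set (Pt N)) :=
    convexHull_min htV (convex_convexHull ℝ _)
  rw [show M - s = (r - s) + (M - r) by omega] at hq
  obtain ⟨q₁, q₂, rfl, hq₁, hq₂⟩ := hq.exists_add_of_add
  have hγ' := (convex_convexHull ℝ _).add_mem_latPts_dil_of_decomposesIn hγ hq₁
  rw [show s + (r - s) = r by omega] at hγ'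
  exact ⟨γ + q₁, latPts_mono (dil_mono htV' r) hγ', q₂, hq₂.mono htV', by
    show (M : ℝ) • x = _; rw [hsum, add_assoc]⟩

theorem HasIDP.dil_of_le {N : ℕ} {P : Set (Pt N)} (hP : IsIntegralPolytope P) {k n : ℕ}
    (hk : HasIDP (dil k P)) (hdk : polyDim P - 1 ≤ 2 * k) (hkn : k ≤ n) : HasIDP (dil n P) := by
  intro m hm α hα
  rw [dil_dil] at hα
  have hconv := hP.convex
  have hne : P.Nonempty := Set.smul_set_nonempty.1 ⟨α, hα.1⟩
  obtain rfl | ⟨m, rfl⟩ : m = 1 ∨ ∃ m', m = m' + 2 := by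
    rcases m with _ | _ | m <;> simp_all
  · exact .single (by simpa using hα)
  obtain ⟨γ, hγ, q, hq, rfl⟩ :=
    hP.exists_latPts_add_decomposesIn hdk (by nlinarith) hα
  rw [← dil_dil] at hγ
  obtain ⟨g, hg, rfl⟩ := hk 2 two_pos γ hγ
  rw [show (m + 2) * n - 2 * k = (n - k) + ((n - k) + m * n) by
    rw [Nat.add_mul]; omega] at hq
  obtain ⟨q₁, q', rfl, hq₁, hq'⟩ := hq.exists_add_of_add
  obtain ⟨q₂, q₃, rfl, hq₂, hq₃⟩ := hq'.exists_add_of_add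
  have hkn' : k + (n - k) = n := by omega
  have h₁ := hconv.add_mem_latPts_dil_of_decomposesIn (hg 0) hq₁
  have h₂ := hconv.add_mem_latPts_dil_of_decomposesIn (hg 1) hq₂
  rw [hkn'] at h₁ h₂
  have := (DecomposesIn.single h₁).add ((DecomposesIn.single h₂).add (hq₃.to_dil hconv hne))
  rw [show 1 + (1 + m) = m + 2 by omega] at this
  convert this using 1
  rw [Fin.sum_univ_two]
  abel

/-- if `μ_midp(P) ≥ (d-1)/2`, then `nP` has (IDP) for all
`n ≥ μ_midp(P)`; i.e. `μ_idp(P) = μ_midp(P)`. -/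
theorem idp_eq_midp {N d : ℕ} (P : Set (Pt N))
    (hP : IsIntegralPolytope P) (hdim : polyDim P = d)
    (k : ℕ) (hk : IsLeast {k : ℕ | 0 < k ∧ HasIDP (dil k P)} k)
    (hbig : (d : ℝ) - 1 ≤ 2 * k) :
    (∀ n, k ≤ n → HasIDP (dil n P)) ∧
    IsLeast {k' : ℕ | 0 < k' ∧ ∀ n, k' ≤ n → HasIDP (dil n P)} k := by
  obtain ⟨⟨hk0, hkidp⟩, hkmin⟩ := hk
  have hdk : polyDim P - 1 ≤ 2 * k := by
    have : (d : ℝ) ≤ 2 * k + 1 := by linarith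
    have : d ≤ 2 * k + 1 := by exact_mod_cast this
    omega
  have hidp : ∀ n, k ≤ n → HasIDP (dil n P) := fun n hn => hkidp.dil_of_le hP hdk hn
  exact ⟨hidp, ⟨hk0, hidp⟩, fun k' hk' => hkmin ⟨hk'.1, hk'.2 k' le_rfl⟩⟩
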